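/- arXiv:1701.04196 — 2 statements merged into one kernel-verified Lean document; each statement's English description precedes it below -/
import Mathlib

section
/- The kernel of the character ε_∞ : B_ℤ → ℂ, f ↦ lim_{k→∞} f(k), equals the closed linear span of {1_n − 1_m : n, m ∈ ℤ, n < m}, and this set equals the set of all f ∈ B_ℤ vanishing at infinity, i.e., those f with f(k) → 0 both as k → +∞ and as k → −∞. -/
open BoundedContinuousFunction Filter Topology

/-- The indicator function of `{k : ℤ | n ≤ k}` as a bounded (continuous) function `ℤ → ℂ`,
an element of `ℓ∞(ℤ, ℂ)`. -/
noncomputable def indBZ (n : ℤ) : ℤ →ᵇ ℂ :=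
  BoundedContinuousFunction.ofNormedAddCommGroup
    (fun k => if n ≤ k then (1:ℂ) else 0)
    (continuous_of_discreteTopology) 1
    (fun k => by by_cases h : n ≤ k <;> simp [h])

/-- `B_ℤ`: the closed linear span of `{1_n : n ∈ ℤ}` in `ℓ∞(ℤ, ℂ)`. -/
noncomputable def BZ : Submodule ℂ (ℤ →ᵇ ℂ) :=
  (Submodule.span ℂ (Set.range indBZ)).topologicalClosure

/-- The closed linear span of `{1_n − 1_m : n, m ∈ ℤ, n < m}` in `ℓ∞(ℤ, ℂ)`. -/
noncomputable def C0span : Submodule ℂ (ℤ →ᵇ ℂ) :=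
  (Submodule.span ℂ {g : ℤ →ᵇ ℂ | ∃ n m : ℤ, n < m ∧ g = indBZ n - indBZ m}).topologicalClosure

/-!
Each `1_n − 1_m` vanishes at `±∞`, and vanishing at `±∞` is a closed condition in the sup norm,
so `C0span` lies in the vanishing part of `B_ℤ`, which lies in the kernel of `ε_∞`.
Conversely, `1_n = (1_n − 1_0) + 1_0` writes every finite combination of indicators as
`d + c • 1_0` with `d` in the span of the differences and `c` its limit at `+∞`. If `f` is in the
kernel and within `ε` of `d + c • 1_0`, comparing limits at `+∞` gives `‖c‖ ≤ ε`, so `f` is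
within `2ε` of `d`.
-/

namespace BoundedContinuousFunction

variable {α E : Type*} [TopologicalSpace α]

theorem isClosed_setOf_tendsto [PseudoMetricSpace E] (l : Filter α) (b : E) :
    IsClosed {f : α →ᵇ E | Tendsto f l (𝓝 b)} := by
  set S := {f : α →ᵇ E | Tendsto f l (𝓝 b)}
  refine isClosed_iff_clusterPt.2 fun f (hf : NeBot (𝓝[S] f)) => ?_
  exact (tendsto_iff_tendstoUniformly.1 (tendsto_nhdsWithin_of_tendsto_nhds tendsto_id))
    |>.tendsto_of_eventually_tendsto (eventually_mem_nhdsWithin (s := S)) tendsto_const_nhds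

theorem dist_le_of_tendsto [PseudoMetricSpace E] {l : Filter α} [l.NeBot] {f g : α →ᵇ E}
    {a b : E} (hf : Tendsto f l (𝓝 a)) (hg : Tendsto g l (𝓝 b)) : dist a b ≤ dist f g :=
  le_of_tendsto (hf.dist hg) (Eventually.of_forall fun x => dist_coe_le_dist x)

variable (𝕜 : Type*) [NormedField 𝕜] [SeminormedAddCommGroup E] [NormedSpace 𝕜 E]

def tendstoZeroSubmodule (l : Filter α) : Submodule 𝕜 (α →ᵇ E) where
  carrier := {f | Tendsto f l (𝓝 0)}
  zero_mem' := tendsto_const_nhds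
  add_mem' hf hg := add_zero (0 : E) ▸ hf.add hg
  smul_mem' c _ hf := (smul_zero c : c • (0 : E) = 0) ▸ hf.const_smul c

end BoundedContinuousFunction

theorem indBZ_apply (n k : ℤ) : indBZ n k = if n ≤ k then 1 else 0 := rfl

theorem norm_indBZ_le (n : ℤ) : ‖indBZ n‖ ≤ 1 :=
  norm_ofNormedAddCommGroup_le _ zero_le_one _

theorem tendsto_indBZ_atTop (n : ℤ) : Tendsto (indBZ n) atTop (𝓝 1) :=
  tendsto_const_nhds.congr' <| (eventually_ge_atTop n).mono fun k hk => by
    simp [indBZ_apply, hk]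

theorem tendsto_indBZ_atBot (n : ℤ) : Tendsto (indBZ n) atBot (𝓝 0) :=
  tendsto_const_nhds.congr' <| (eventually_lt_atBot n).mono fun k hk => by
    simp [indBZ_apply, not_le.2 hk]

theorem tendsto_indBZ_sub_indBZ {l : Filter ℤ} {c : ℂ} (hl : ∀ n, Tendsto (indBZ n) l (𝓝 c))
    (n m : ℤ) : Tendsto (indBZ n - indBZ m) l (𝓝 0) :=
  sub_self c ▸ (hl n).sub (hl m)

def indBZDiffs : Set (ℤ →ᵇ ℂ) := {g | ∃ n m : ℤ, n < m ∧ g = indBZ n - indBZ m}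

theorem indBZ_sub_indBZ_mem_span (n m : ℤ) :
    indBZ n - indBZ m ∈ Submodule.span ℂ indBZDiffs := by
  rcases lt_trichotomy n m with h | rfl | h
  · exact Submodule.subset_span ⟨n, m, h, rfl⟩
  · simp
  · rw [← neg_sub]
    exact Submodule.neg_mem _ (Submodule.subset_span ⟨m, n, h, rfl⟩)

theorem span_indBZDiffs_le_tendstoZero {l : Filter ℤ} {c : ℂ}
    (hl : ∀ n, Tendsto (indBZ n) l (𝓝 c)) :
    Submodule.span ℂ indBZDiffs ≤ tendstoZeroSubmodule ℂ l :=
  Submodule.span_le.2 <| by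
    rintro _ ⟨n, m, -, rfl⟩
    exact tendsto_indBZ_sub_indBZ hl n m

theorem C0span_le_tendstoZero {l : Filter ℤ} {c : ℂ} (hl : ∀ n, Tendsto (indBZ n) l (𝓝 c)) :
    C0span ≤ tendstoZeroSubmodule ℂ l :=
  Submodule.topologicalClosure_minimal _ (span_indBZDiffs_le_tendstoZero hl)
    (isClosed_setOf_tendsto l 0)

theorem C0span_le_BZ : C0span ≤ BZ :=
  Submodule.topologicalClosure_mono <| Submodule.span_le.2 <| by
    rintro _ ⟨n, m, -, rfl⟩
    exact sub_mem (Submodule.subset_span ⟨n, rfl⟩) (Submodule.subset_span ⟨m, rfl⟩)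

theorem span_range_indBZ_le (m : ℤ) :
    Submodule.span ℂ (Set.range indBZ) ≤ Submodule.span ℂ indBZDiffs ⊔ ℂ ∙ indBZ m :=
  Submodule.span_le.2 <| by
    rintro _ ⟨n, rfl⟩
    exact Submodule.mem_sup.2 ⟨_, indBZ_sub_indBZ_mem_span n m, _,
      Submodule.mem_span_singleton_self _, sub_add_cancel (indBZ n) (indBZ m)⟩

theorem mem_C0span_of_tendsto_atTop {f : ℤ →ᵇ ℂ} (hfB : f ∈ BZ)
    (hf : Tendsto f atTop (𝓝 0)) : f ∈ C0span := by
  refine Metric.mem_closure_iff.2 fun ε hε => ?_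
  obtain ⟨g, hg, hfg⟩ := Metric.mem_closure_iff.1 hfB (ε / 2) (half_pos hε)
  obtain ⟨d, hd, _, hc, rfl⟩ := Submodule.mem_sup.1 (span_range_indBZ_le 0 hg)
  obtain ⟨c, rfl⟩ := Submodule.mem_span_singleton.1 hc
  have hlim : Tendsto (d + c • indBZ 0) atTop (𝓝 c) := by
    convert (span_indBZDiffs_le_tendstoZero tendsto_indBZ_atTop hd).add
      ((tendsto_indBZ_atTop 0).const_smul c) using 2 <;> simp
  have hc : ‖c‖ ≤ dist f (d + c • indBZ 0) := by
    simpa using dist_le_of_tendsto hf hlim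
  refine ⟨d, hd, ?_⟩
  calc dist f d ≤ dist f (d + c • indBZ 0) + ‖c • indBZ 0‖ := by
        simpa using dist_triangle f (d + c • indBZ 0) d
    _ ≤ dist f (d + c • indBZ 0) + ‖c‖ := by
        grw [norm_smul, norm_indBZ_le, mul_one]
    _ < ε := by linarith

/-- The kernel of the character `ε_∞ : B_ℤ → ℂ`, `f ↦ lim_{k→∞} f k` (i.e., the set of
`f ∈ B_ℤ` with `f k → 0` as `k → +∞`) equals the closed linear span of
`{1_n − 1_m : n < m}`, and this set equals the set of all `f ∈ B_ℤ` vanishing at infinity,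
i.e., those with `f k → 0` both as `k → +∞` and as `k → −∞`. -/
theorem ker_limit_character_BZ :
    {f : ℤ →ᵇ ℂ | f ∈ BZ ∧ Tendsto (fun k : ℤ => f k) atTop (𝓝 (0 : ℂ))} =
        (C0span : Set (ℤ →ᵇ ℂ)) ∧
    (C0span : Set (ℤ →ᵇ ℂ)) =
        {f : ℤ →ᵇ ℂ | f ∈ BZ ∧ Tendsto (fun k : ℤ => f k) atTop (𝓝 (0 : ℂ)) ∧
          Tendsto (fun k : ℤ => f k) atBot (𝓝 (0 : ℂ))} := by
  have ker_le : {f : ℤ →ᵇ ℂ | f ∈ BZ ∧ Tendsto f atTop (𝓝 0)} ⊆ C0span :=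
    fun f hf => mem_C0span_of_tendsto_atTop hf.1 hf.2
  have le_vanishing : (C0span : Set (ℤ →ᵇ ℂ)) ⊆
      {f | f ∈ BZ ∧ Tendsto f atTop (𝓝 0) ∧ Tendsto f atBot (𝓝 0)} :=
    fun f hf => ⟨C0span_le_BZ hf, C0span_le_tendstoZero tendsto_indBZ_atTop hf,
      C0span_le_tendstoZero tendsto_indBZ_atBot hf⟩
  have vanishing_le : {f : ℤ →ᵇ ℂ | f ∈ BZ ∧ Tendsto f atTop (𝓝 0) ∧ Tendsto f atBot (𝓝 0)} ⊆
      {f | f ∈ BZ ∧ Tendsto f atTop (𝓝 0)} :=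
    fun f hf => ⟨hf.1, hf.2.1⟩
  exact ⟨ker_le.antisymm (le_vanishing.trans vanishing_le),
    le_vanishing.antisymm (vanishing_le.trans ker_le)⟩
end

section
/- Suppose Y is Hausdorff, and let Q denote the quotient of (Z∞ × Y) × 𝕋 by the Williams relation, with the quotient topology. Then the map ι : Y → Q sending φ to the class of ((0, φ), 1) is injective, continuous, and open onto its image; its image equals the set of classes of points whose first coordinate lies in ℤ, and this image is open and dense in Q. -/
open Filter Topology

/-- The order topology on `Z∞ = ℤ ∪ {∞}` (formally `WithTop ℤ`): every `n ∈ ℤ` is isolated,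
and the sets `J_n = {k : ℤ | n ≤ k} ∪ {∞}` form a neighborhood basis at `∞`. -/
noncomputable instance : TopologicalSpace (WithTop ℤ) := Preorder.topology (WithTop ℤ)

instance : OrderTopology (WithTop ℤ) := ⟨rfl⟩

/-- The integer power `σⁿ` (`n : ℤ`) of a homeomorphism `σ : Y ≃ₜ Y`, as a function. -/
def sigmaPow {Y : Type*} [TopologicalSpace Y] (σ : Y ≃ₜ Y) (n : ℤ) : Y → Y :=
  fun y => (σ.toEquiv ^ n) y

/-- The action of `ℤ` on `Z∞ × Y`: `n·(m, y) = (m + n, y)` for `m ∈ ℤ`, and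
`n·(∞, y) = (∞, σⁿ(y))`. -/
def actZ {Y : Type*} [TopologicalSpace Y] (σ : Y ≃ₜ Y) (n : ℤ) (p : WithTop ℤ × Y) :
    WithTop ℤ × Y :=
  (p.1.map (· + n), if p.1 = ⊤ then sigmaPow σ n p.2 else p.2)

/-- The Williams relation on `X × 𝕋` associated to an action `act` of `ℤ` on a topological
space `X`: `(x, z) ∼ (y, w)` iff the closures of the `ℤ`-orbits of `x` and `y` coincide and
`zⁿ = wⁿ` for all `n` in the stability group of `x`. -/
def williams {X : Type*} [TopologicalSpace X] (act : ℤ → X → X)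
    (p q : X × Circle) : Prop :=
  closure (Set.range fun n : ℤ => act n p.1) = closure (Set.range fun n : ℤ => act n q.1) ∧
  ∀ n : ℤ, act n p.1 = p.1 → p.2 ^ n = q.2 ^ n

/-- The map `ι : Y → Q` into the quotient `Q` of `(Z∞ × Y) × 𝕋` by the Williams relation,
sending `φ` to the class of `((0, φ), 1)`. -/
noncomputable def iotaQ {Y : Type*} [TopologicalSpace Y] (σ : Y ≃ₜ Y) :
    Y → Quot (williams (actZ σ)) :=
  fun φ => Quot.mk _ ((((0 : ℤ) : WithTop ℤ), φ), (1 : Circle))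

/-
The Williams class of a point remembers the closure of its orbit. For `m ∈ ℤ` the orbit of
`(m, φ)` is `ℤ × {φ}`, whose closure (`Y` being T₁) still determines `φ`, and whose stabiliser
is trivial, so every `((m, φ), z)` is identified with `((0, φ), 1)`. Orbit closures of points
`(∞, y)` stay inside the closed set `{∞} × Y`, so those classes miss the image of `ι`. Hence
the saturation of `ι(U)` is the open set `ℤ × U × 𝕋`, and density of the image comes from
`ℤ` being dense in `Z∞`.
-/

lemma WithTop.denseRange_coe {ι : Type*} [LinearOrder ι] [TopologicalSpace ι] [OrderTopology ι]
    [NoMaxOrder ι] [Nonempty ι] :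
    DenseRange ((↑) : ι → WithTop ι) := by
  intro t
  induction t with
  | top => exact mem_closure_of_tendsto WithTop.tendsto_coe_atTop (.of_forall Set.mem_range_self)
  | coe i => exact subset_closure (Set.mem_range_self i)

def williamsOrbitClosure {X : Type*} [TopologicalSpace X] (act : ℤ → X → X) :
    Quot (williams act) → Set X :=
  Quot.lift (fun p => closure (Set.range fun n : ℤ => act n p.1)) fun _ _ h => h.1

section

variable {Y : Type*} [TopologicalSpace Y] (σ : Y ≃ₜ Y)

@[simp]
lemma actZ_coe (n m : ℤ) (φ : Y) :
    actZ σ n ((m : WithTop ℤ), φ) = (((m + n : ℤ) : WithTop ℤ), φ) := by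
  simp [actZ, WithTop.map_coe]

@[simp]
lemma actZ_top (n : ℤ) (y : Y) : actZ σ n (⊤, y) = (⊤, sigmaPow σ n y) := by
  simp [actZ]

lemma range_actZ_coe (m : ℤ) (φ : Y) :
    Set.range (fun n : ℤ => actZ σ n ((m : WithTop ℤ), φ)) =
      Set.range fun k : ℤ => ((k : WithTop ℤ), φ) := by
  simp only [actZ_coe]
  exact (Equiv.addLeft m).surjective.range_comp fun k : ℤ => ((k : WithTop ℤ), φ)

lemma actZ_coe_eq_self_iff {n m : ℤ} {φ : Y} :
    actZ σ n ((m : WithTop ℤ), φ) = ((m : WithTop ℤ), φ) ↔ n = 0 := by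
  simp

lemma williams_coe_zero (m : ℤ) (φ : Y) (z : Circle) :
    williams (actZ σ) (((m : WithTop ℤ), φ), z) ((((0 : ℤ) : WithTop ℤ), φ), 1) := by
  refine ⟨by rw [range_actZ_coe, range_actZ_coe], fun n hn => ?_⟩
  rw [(actZ_coe_eq_self_iff σ).1 hn, zpow_zero, zpow_zero]

lemma mk_coe_eq_iotaQ (m : ℤ) (φ : Y) (z : Circle) :
    Quot.mk (williams (actZ σ)) (((m : WithTop ℤ), φ), z) = iotaQ σ φ :=
  Quot.sound (williams_coe_zero σ m φ z)

lemma mem_williamsOrbitClosure_iotaQ (φ : Y) :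
    (((0 : ℤ) : WithTop ℤ), φ) ∈ williamsOrbitClosure (actZ σ) (iotaQ σ φ) :=
  subset_closure ⟨0, (actZ_coe σ 0 0 φ).trans (by rw [add_zero])⟩

lemma williamsOrbitClosure_iotaQ_subset [T1Space Y] (φ : Y) :
    williamsOrbitClosure (actZ σ) (iotaQ σ φ) ⊆ Prod.snd ⁻¹' {φ} :=
  closure_minimal (Set.range_subset_iff.2 fun n => by rw [actZ_coe]; rfl)
    (isClosed_singleton.preimage continuous_snd)

lemma williamsOrbitClosure_mk_top_subset (y : Y) (z : Circle) :
    williamsOrbitClosure (actZ σ) (Quot.mk _ ((⊤, y), z)) ⊆ Prod.fst ⁻¹' {⊤} :=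
  closure_minimal (Set.range_subset_iff.2 fun n => by simp)
    (isClosed_singleton.preimage continuous_fst)

lemma iotaQ_injective [T1Space Y] : Function.Injective (iotaQ σ) := fun φ φ' h => by
  have h' := mem_williamsOrbitClosure_iotaQ σ φ'
  rw [← h] at h'
  exact (williamsOrbitClosure_iotaQ_subset σ φ h').symm

lemma mk_top_ne_iotaQ (y : Y) (z : Circle) (φ : Y) :
    Quot.mk (williams (actZ σ)) ((⊤, y), z) ≠ iotaQ σ φ := fun h => by
  have h' := mem_williamsOrbitClosure_iotaQ σ φ
  rw [← h] at h'
  exact WithTop.coe_ne_top (williamsOrbitClosure_mk_top_subset σ y z h')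

lemma mk_mem_image_iotaQ_iff [T1Space Y] {U : Set Y} {t : WithTop ℤ} {y : Y} {z : Circle} :
    Quot.mk (williams (actZ σ)) ((t, y), z) ∈ iotaQ σ '' U ↔ t ≠ ⊤ ∧ y ∈ U := by
  induction t with
  | top => simpa using fun φ _ => (mk_top_ne_iotaQ σ y z φ).symm
  | coe m => simp [mk_coe_eq_iotaQ, (iotaQ_injective σ).mem_set_image]

lemma continuous_iotaQ : Continuous (iotaQ σ) :=
  continuous_quot_mk.comp (by fun_prop)

lemma isOpenMap_iotaQ [T1Space Y] : IsOpenMap (iotaQ σ) := by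
  intro U hU
  rw [← isQuotientMap_quot_mk.isOpen_preimage]
  have hsat : Quot.mk _ ⁻¹' (iotaQ σ '' U) =
      (fun p : (WithTop ℤ × Y) × Circle => p.1.1) ⁻¹' {⊤}ᶜ ∩ (fun p => p.1.2) ⁻¹' U := by
    ext ⟨⟨t, y⟩, z⟩
    exact mk_mem_image_iotaQ_iff σ
  rw [hsat]
  exact (isOpen_compl_singleton.preimage (by fun_prop)).inter (hU.preimage (by fun_prop))

lemma range_iotaQ : Set.range (iotaQ σ) =
    {q : Quot (williams (actZ σ)) | ∃ (m : ℤ) (φ : Y) (z : Circle),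
      q = Quot.mk _ (((m : WithTop ℤ), φ), z)} := by
  ext q
  constructor
  · rintro ⟨φ, rfl⟩
    exact ⟨0, φ, 1, rfl⟩
  · rintro ⟨m, φ, z, rfl⟩
    exact ⟨φ, (mk_coe_eq_iotaQ σ m φ z).symm⟩

lemma denseRange_iotaQ : DenseRange (iotaQ σ) := by
  have hdense : Dense ((Set.range ((↑) : ℤ → WithTop ℤ) ×ˢ Set.univ) ×ˢ Set.univ :
      Set ((WithTop ℤ × Y) × Circle)) :=
    (WithTop.denseRange_coe.prod dense_univ).prod dense_univ
  refine ((Quot.mk_surjective.denseRange.dense_image continuous_quot_mk hdense).mono ?_)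
  rintro _ ⟨⟨⟨_, y⟩, z⟩, ⟨⟨⟨m, rfl⟩, -⟩, -⟩, rfl⟩
  exact ⟨y, (mk_coe_eq_iotaQ σ m y z).symm⟩

end

/-- For Hausdorff `Y`, the map `ι : Y → Q`, `φ ↦ [((0, φ), 1)]`, is injective, continuous
and open onto its image; its image is the set of classes of points whose first coordinate
lies in `ℤ`, and this image is open and dense in `Q`. -/
theorem iotaQ_properties {Y : Type*} [TopologicalSpace Y] [T2Space Y] (σ : Y ≃ₜ Y) :
    Function.Injective (iotaQ σ) ∧
    Continuous (iotaQ σ) ∧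
    IsOpenMap (iotaQ σ) ∧
    Set.range (iotaQ σ) =
      {q : Quot (williams (actZ σ)) | ∃ (m : ℤ) (φ : Y) (z : Circle),
        q = Quot.mk _ (((m : WithTop ℤ), φ), z)} ∧
    IsOpen (Set.range (iotaQ σ)) ∧
    Dense (Set.range (iotaQ σ)) :=
  ⟨iotaQ_injective σ, continuous_iotaQ σ, isOpenMap_iotaQ σ, range_iotaQ σ,
    (isOpenMap_iotaQ σ).isOpen_range, denseRange_iotaQ σ⟩
end
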